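/- arXiv:2512.12408 — 4 statements merged into one kernel-verified Lean document; each statement's English description precedes it below -/
import Mathlib

section
/- For fixed α > 0 and δ > -1, the equation ρ̂(λ; α, δ) = 1 has a unique root λ* in (0, ∞); moreover ρ̂ is continuous and strictly decreasing in λ on (0,∞), with ρ̂(λ) → ∞ as λ → 0+ and ρ̂(λ) → 0 as λ → ∞. -/
open Finset Filter Topology

/-!
Write `c i = (i + δ + 1) ^ α`; these rates are bounded below by `c₀ = (δ + 1) ^ α > 0`. The `n`-th
term of `ρ̂` is a product of factors `1 / (c i λ + 1)`, each decreasing in `λ` and at most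
`1 / (c₀ λ + 1)`, so the series is dominated by a geometric series of sum `1 / (c₀ λ)`. This gives
summability, strict decrease, locally uniform convergence (hence continuity) and `ρ̂ → 0` at
infinity; as `λ → 0⁺` every term tends to `1`, so `ρ̂ → ∞`. The intermediate value theorem and
strict monotonicity then give exactly one root of `ρ̂ = 1`.
-/

theorem existsUnique_eq_of_strictAntiOn_Ioi {f : ℝ → ℝ} {a b y : ℝ}
    (hcont : ContinuousOn f (Set.Ioi a)) (hanti : StrictAntiOn f (Set.Ioi a))
    (hleft : Tendsto f (𝓝[>] a) atTop) (hright : Tendsto f atTop (𝓝 b)) (hy : b < y) :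
    ∃! x, x ∈ Set.Ioi a ∧ f x = y := by
  obtain ⟨x₁, hx₁y, hx₁⟩ := ((hleft.eventually_gt_atTop y).and self_mem_nhdsWithin).exists
  obtain ⟨x₂, hx₂y, hx₁₂⟩ :=
    ((hright.eventually (gt_mem_nhds hy)).and (eventually_gt_atTop x₁)).exists
  have hsub : Set.Icc x₁ x₂ ⊆ Set.Ioi a := fun x hx => lt_of_lt_of_le hx₁ hx.1
  obtain ⟨x, hx, hfx⟩ :=
    intermediate_value_Icc' hx₁₂.le (hcont.mono hsub) ⟨hx₂y.le, hx₁y.le⟩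
  exact ⟨x, ⟨hsub hx, hfx⟩, fun x' ⟨hx', hfx'⟩ => hanti.injOn hx' (hsub hx) (hfx'.trans hfx.symm)⟩

namespace Malthusian

noncomputable def term (c : ℕ → ℝ) (l : ℝ) (n : ℕ) : ℝ :=
  ∏ i ∈ range (n + 1), 1 / (c i * l + 1)

/-- The paper's `ρ̂(λ; α, δ)` is `rhoHat (fun i => (i + δ + 1) ^ α) λ`, summed from `n = 0`. -/
noncomputable def rhoHat (c : ℕ → ℝ) (l : ℝ) : ℝ :=
  ∑' n, term c l n

variable {c : ℕ → ℝ} {c₀ l l₁ l₂ : ℝ}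

theorem term_pos (hc : ∀ i, 0 ≤ c i) (hl : 0 ≤ l) (n : ℕ) : 0 < term c l n :=
  prod_pos fun i _ => by have := mul_nonneg (hc i) hl; positivity

theorem term_le_term_of_le (hc : ∀ i, 0 ≤ c i) (hl₁ : 0 ≤ l₁) (h : l₁ ≤ l₂) (n : ℕ) :
    term c l₂ n ≤ term c l₁ n := by
  refine prod_le_prod (fun i _ => ?_) fun i _ => ?_
  · have := mul_nonneg (hc i) (hl₁.trans h); positivity
  · exact one_div_le_one_div_of_le (by nlinarith [hc i])
      (by nlinarith [mul_le_mul_of_nonneg_left h (hc i)])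

theorem term_zero_lt_term_zero_of_lt (hc : 0 < c 0) (hl₁ : 0 ≤ l₁) (h : l₁ < l₂) :
    term c l₂ 0 < term c l₁ 0 := by
  simp only [term, zero_add, prod_range_one]
  exact one_div_lt_one_div_of_lt (by nlinarith) (by nlinarith)

theorem term_le_geometric (hc₀ : 0 ≤ c₀) (hc : ∀ i, c₀ ≤ c i) (hl : 0 ≤ l) (n : ℕ) :
    term c l n ≤ 1 / (c₀ * l + 1) * (1 / (c₀ * l + 1)) ^ n := by
  rw [← pow_succ', ← card_range (n + 1), ← prod_const]
  refine prod_le_prod (fun i _ => ?_) fun i _ => ?_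
  · have := mul_nonneg (hc₀.trans (hc i)) hl; positivity
  · exact one_div_le_one_div_of_le (by nlinarith) (by nlinarith [hc i])

theorem one_div_mul_add_one_lt_one (hc₀ : 0 < c₀) (hl : 0 < l) : 1 / (c₀ * l + 1) < 1 := by
  rw [div_lt_one (by positivity)]
  nlinarith

theorem summable_term (hc₀ : 0 < c₀) (hc : ∀ i, c₀ ≤ c i) (hl : 0 < l) :
    Summable (term c l) :=
  .of_nonneg_of_le (fun n => (term_pos (fun i => hc₀.le.trans (hc i)) hl.le n).le)
    (term_le_geometric hc₀.le hc hl.le)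
    ((summable_geometric_of_lt_one (by positivity) (one_div_mul_add_one_lt_one hc₀ hl)).mul_left _)

theorem rhoHat_le_inv (hc₀ : 0 < c₀) (hc : ∀ i, c₀ ≤ c i) (hl : 0 < l) :
    rhoHat c l ≤ (c₀ * l)⁻¹ := by
  have hr := one_div_mul_add_one_lt_one hc₀ hl
  calc rhoHat c l ≤ ∑' n, 1 / (c₀ * l + 1) * (1 / (c₀ * l + 1)) ^ n :=
        (summable_term hc₀ hc hl).tsum_le_tsum (term_le_geometric hc₀.le hc hl.le)
          ((summable_geometric_of_lt_one (by positivity) hr).mul_left _)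
    _ = (c₀ * l)⁻¹ := by
        rw [tsum_mul_left, tsum_geometric_of_lt_one (by positivity) hr]
        field_simp
        ring

theorem strictAntiOn_rhoHat (hc₀ : 0 < c₀) (hc : ∀ i, c₀ ≤ c i) :
    StrictAntiOn (rhoHat c) (Set.Ioi 0) := fun _ hl₁ _ hl₂ h =>
  (summable_term hc₀ hc hl₂).tsum_lt_tsum
    (term_le_term_of_le (fun i => hc₀.le.trans (hc i)) (le_of_lt hl₁) h.le)
    (term_zero_lt_term_zero_of_lt (hc₀.trans_le (hc 0)) (le_of_lt hl₁) h) (summable_term hc₀ hc hl₁)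

theorem continuousOn_rhoHat (hc₀ : 0 < c₀) (hc : ∀ i, c₀ ≤ c i) :
    ContinuousOn (rhoHat c) (Set.Ioi 0) := by
  have hc' : ∀ i, 0 ≤ c i := fun i => hc₀.le.trans (hc i)
  -- on `[ε, ∞)` the series is dominated by its value at `ε`
  have hIci : ∀ ε > 0, ContinuousOn (rhoHat c) (Set.Ici ε) := fun ε hε =>
    continuousOn_tsum
      (fun n => continuousOn_finsetProd _ fun i _ => continuousOn_const.div (by fun_prop)
        fun l hl => by have := mul_nonneg (hc' i) (hε.le.trans hl); positivity)
      (summable_term hc₀ hc hε) fun n l hl => by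
        rw [Real.norm_of_nonneg (term_pos hc' (hε.le.trans hl) n).le]
        exact term_le_term_of_le hc' hε.le hl n
  intro l hl
  exact ((hIci (l / 2) (half_pos hl)).continuousAt
    (Ici_mem_nhds (half_lt_self hl))).continuousWithinAt

theorem tendsto_rhoHat_atTop (hc₀ : 0 < c₀) (hc : ∀ i, c₀ ≤ c i) :
    Tendsto (rhoHat c) atTop (𝓝 0) := by
  refine tendsto_of_tendsto_of_tendsto_of_le_of_le' tendsto_const_nhds
    (tendsto_inv_atTop_zero.comp (tendsto_id.const_mul_atTop hc₀)) ?_ ?_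
  · filter_upwards [eventually_gt_atTop 0] with l hl using
      tsum_nonneg fun n => (term_pos (fun i => hc₀.le.trans (hc i)) hl.le n).le
  · filter_upwards [eventually_gt_atTop 0] with l hl using rhoHat_le_inv hc₀ hc hl

theorem tendsto_term_nhds_zero (c : ℕ → ℝ) (n : ℕ) :
    Tendsto (fun l => term c l n) (𝓝 0) (𝓝 1) := by
  have hcont : ContinuousAt (fun l => term c l n) 0 :=
    tendsto_finsetProd _ fun i _ => continuousAt_const.div (by fun_prop) (by simp)
  convert hcont.tendsto
  simp [term]

theorem tendsto_rhoHat_nhdsGT_zero (hc₀ : 0 < c₀) (hc : ∀ i, c₀ ≤ c i) :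
    Tendsto (rhoHat c) (𝓝[>] 0) atTop := by
  refine tendsto_atTop.2 fun M => ?_
  obtain ⟨N, hN⟩ := exists_nat_gt M
  have hpartial : Tendsto (fun l => ∑ n ∈ range N, term c l n) (𝓝[>] 0) (𝓝 N) := by
    simpa using (tendsto_finsetSum (range N) fun n _ =>
      tendsto_term_nhds_zero c n).mono_left nhdsWithin_le_nhds
  filter_upwards [hpartial.eventually (eventually_gt_nhds hN), self_mem_nhdsWithin]
    with l hM hl
  exact hM.le.trans <| (summable_term hc₀ hc hl).sum_le_tsum _
    fun n _ => (term_pos (fun i => hc₀.le.trans (hc i)) (le_of_lt hl) n).le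

end Malthusian

open Malthusian in
/-- For fixed `a > 0` and `d > -1`, the equation `ρ̂(l) = 1` has a unique root in `(0,∞)`;
moreover `ρ̂` is continuous and strictly decreasing on `(0,∞)`, tends to `∞` as `l → 0⁺`
and tends to `0` as `l → ∞`. -/
theorem malthusian_parameter_exists_unique (a d : ℝ) (ha : 0 < a) (hd : -1 < d) :
    (∃! l : ℝ, l ∈ Set.Ioi (0 : ℝ) ∧
      (∑' n : ℕ, ∏ i ∈ Finset.range (n + 1),
        1 / (((i : ℝ) + d + 1) ^ a * l + 1)) = 1) ∧
    ContinuousOn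
      (fun l : ℝ => ∑' n : ℕ, ∏ i ∈ Finset.range (n + 1),
        1 / (((i : ℝ) + d + 1) ^ a * l + 1)) (Set.Ioi 0) ∧
    StrictAntiOn
      (fun l : ℝ => ∑' n : ℕ, ∏ i ∈ Finset.range (n + 1),
        1 / (((i : ℝ) + d + 1) ^ a * l + 1)) (Set.Ioi 0) ∧
    Tendsto
      (fun l : ℝ => ∑' n : ℕ, ∏ i ∈ Finset.range (n + 1),
        1 / (((i : ℝ) + d + 1) ^ a * l + 1)) (nhdsWithin 0 (Set.Ioi 0)) atTop ∧
    Tendsto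
      (fun l : ℝ => ∑' n : ℕ, ∏ i ∈ Finset.range (n + 1),
        1 / (((i : ℝ) + d + 1) ^ a * l + 1)) atTop (nhds 0) := by
  have hc₀ : 0 < (d + 1) ^ a := Real.rpow_pos_of_pos (by linarith) a
  have hc : ∀ i : ℕ, (d + 1) ^ a ≤ ((i : ℝ) + d + 1) ^ a := fun i =>
    Real.rpow_le_rpow (by linarith) (by linarith [i.cast_nonneg (α := ℝ)]) ha.le
  have hcont := continuousOn_rhoHat hc₀ hc
  have hanti := strictAntiOn_rhoHat hc₀ hc
  have hleft := tendsto_rhoHat_nhdsGT_zero hc₀ hc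
  have hright := tendsto_rhoHat_atTop hc₀ hc
  exact ⟨existsUnique_eq_of_strictAntiOn_Ioi hcont hanti hleft hright one_pos,
    hcont, hanti, hleft, hright⟩
end

section
/- Let {Z(t) : t ≥ 0} be a pure birth process with Z(0) = m almost surely and birth rate 1/(i+δ)^α when in state i (i ≥ m), where m ≥ 1, δ ≥ 0, 0 < α ≤ 1. Then Z(t)/t^{1/(1+α)} → (1+α)^{1/(1+α)} almost surely as t → ∞. -/
open MeasureTheory ProbabilityTheory Filter Finset Real
open scoped Nat Topology

/-!
The birth times are `T (n + 1) = E 0 + ⋯ + E (n - 1)` with independent exponential `E k` of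
mean `(k + m + d) ^ a`. The means add up to `n ^ (1 + a) / (1 + a)` asymptotically, while the
variances add up to `O(n ^ (1 + 2a))`, so by Chebyshev a relative deviation of `T` at time `n` has
probability `O(1 / n)`. This is summable along `n = j ^ 2`, so Borel–Cantelli gives the law of large
numbers along squares, and monotonicity of `T` fills the gaps. Since `Z` is the inverse of
`n ↦ T n`, it grows like `((1 + a) t) ^ (1 / (1 + a))`.
-/

namespace ProbabilityTheory

lemma ae_nonneg_expMeasure (r : ℝ) : ∀ᵐ x ∂expMeasure r, 0 ≤ x := by
  rw [ae_iff, show {x : ℝ | ¬0 ≤ x} = Set.Iio 0 by ext; simp, expMeasure, gammaMeasure,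
    withDensity_apply _ measurableSet_Iio]
  exact lintegral_gammaPDF_of_nonpos le_rfl

lemma integral_pow_expMeasure {r : ℝ} (hr : 0 < r) (n : ℕ) :
    ∫ x, x ^ n ∂expMeasure r = n ! / r ^ n := by
  have hpdf : ∀ x, (gammaPDF 1 r x).toReal • x ^ n
      = (Set.Ici 0).indicator (fun x => r * (x ^ ((n + 1 : ℝ) - 1) * exp (-(r * x)))) x := by
    intro x
    by_cases hx : 0 ≤ x
    · rw [Set.indicator_of_mem (Set.mem_Ici.2 hx), gammaPDF, gammaPDFReal, if_pos hx,
        ENNReal.toReal_ofReal (by positivity), add_sub_cancel_right, rpow_natCast]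
      simp only [rpow_one, Gamma_one, div_one, sub_self, rpow_zero, mul_one, smul_eq_mul]
      ring
    · rw [Set.indicator_of_notMem (mt Set.mem_Ici.1 hx), gammaPDF_of_neg (not_le.1 hx)]
      simp
  rw [expMeasure, gammaMeasure, integral_withDensity_eq_integral_toReal_smul (f := gammaPDF 1 r)
      (measurable_gammaPDFReal 1 r).ennreal_ofReal (ae_of_all _ fun _ => ENNReal.ofReal_lt_top),
    integral_congr_ae (ae_of_all _ hpdf), integral_indicator measurableSet_Ici,
    integral_Ici_eq_integral_Ioi, integral_const_mul,
    integral_rpow_mul_exp_neg_mul_Ioi (by positivity) hr,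
    Gamma_nat_eq_factorial, ← Nat.cast_add_one, rpow_natCast, pow_succ, one_div, inv_pow]
  field_simp

lemma integrable_pow_expMeasure {r : ℝ} (hr : 0 < r) (n : ℕ) :
    Integrable (fun x : ℝ => x ^ n) (expMeasure r) :=
  .of_integral_ne_zero (by rw [integral_pow_expMeasure hr]; positivity)

variable {Ω : Type*} {mΩ : MeasurableSpace Ω} {P : Measure Ω} {X : Ω → ℝ} {r : ℝ}

lemma HasLaw.memLp_two_of_expMeasure (hX : HasLaw X (expMeasure r) P) (hr : 0 < r) :
    MemLp X 2 P := by
  have : MemLp id 2 (expMeasure r) :=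
    (memLp_two_iff_integrable_sq aestronglyMeasurable_id).2 (integrable_pow_expMeasure hr 2)
  rw [← hX.map_eq] at this
  exact (memLp_map_measure_iff aestronglyMeasurable_id hX.aemeasurable).1 this

lemma HasLaw.integral_eq_inv_of_expMeasure (hX : HasLaw X (expMeasure r) P) (hr : 0 < r) :
    P[X] = r⁻¹ := by
  rw [hX.integral_eq]
  simpa using integral_pow_expMeasure hr 1

lemma HasLaw.variance_eq_inv_sq_of_expMeasure (hX : HasLaw X (expMeasure r) P) (hr : 0 < r) :
    Var[X; P] = r⁻¹ ^ 2 := by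
  have := isProbabilityMeasure_expMeasure hr
  rw [hX.variance_eq, variance_eq_sub
      ((memLp_two_iff_integrable_sq aestronglyMeasurable_id).2 (integrable_pow_expMeasure hr 2))]
  simp only [Pi.pow_apply, id_eq]
  rw [integral_pow_expMeasure hr 2, show ∫ x, x ∂expMeasure r = ∫ x, x ^ 1 ∂expMeasure r by simp,
    integral_pow_expMeasure hr 1]
  simp only [Nat.factorial, pow_one]
  ring

end ProbabilityTheory

lemma rpow_add_one_sub_rpow_mem_Icc {a x : ℝ} (ha : 0 ≤ a) (hx : 0 ≤ x) :
    (x + 1) ^ (1 + a) - x ^ (1 + a) ∈ Set.Icc ((1 + a) * x ^ a) ((1 + a) * (x + 1) ^ a) := by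
  obtain ⟨y, ⟨hxy, hyx⟩, hy⟩ := exists_hasDerivAt_eq_slope (fun x : ℝ => x ^ (1 + a))
    (fun x => (1 + a) * x ^ a) (lt_add_one x)
    (fun z _ => (continuousAt_rpow_const z _ (Or.inr (by linarith))).continuousWithinAt)
    (fun z _ => by simpa using hasDerivAt_rpow_const (x := z) (Or.inr (by linarith : 1 ≤ 1 + a)))
  rw [add_sub_cancel_left, div_one] at hy
  have hy0 : 0 ≤ y := by linarith
  rw [← hy]
  exact ⟨by gcongr, by gcongr⟩

lemma sum_range_rpow_add_one_sub_rpow (c p : ℝ) (n : ℕ) :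
    ∑ k ∈ range n, (((k : ℝ) + c + 1) ^ p - ((k : ℝ) + c) ^ p) = ((n : ℝ) + c) ^ p - c ^ p := by
  simpa [add_right_comm] using sum_range_sub (fun k : ℕ => ((k : ℝ) + c) ^ p) n

lemma one_add_mul_sum_range_rpow_le {a c : ℝ} (ha : 0 ≤ a) (hc : 0 ≤ c) (n : ℕ) :
    (1 + a) * ∑ k ∈ range n, ((k : ℝ) + c) ^ a ≤ ((n : ℝ) + c) ^ (1 + a) :=
  calc (1 + a) * ∑ k ∈ range n, ((k : ℝ) + c) ^ a
      ≤ ∑ k ∈ range n, (((k : ℝ) + c + 1) ^ (1 + a) - ((k : ℝ) + c) ^ (1 + a)) := by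
        rw [mul_sum]
        exact sum_le_sum fun k _ => (rpow_add_one_sub_rpow_mem_Icc ha (by positivity)).1
    _ ≤ ((n : ℝ) + c) ^ (1 + a) := by
        rw [sum_range_rpow_add_one_sub_rpow c (1 + a)]
        linarith [rpow_nonneg hc (1 + a)]

lemma rpow_le_one_add_mul_sum_range_succ_rpow {a c : ℝ} (ha : 0 ≤ a) (hc : 0 ≤ c) (n : ℕ) :
    (n : ℝ) ^ (1 + a) ≤ (1 + a) * ∑ k ∈ range (n + 1), ((k : ℝ) + c) ^ a :=
  calc (n : ℝ) ^ (1 + a)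
      ≤ ((n : ℝ) + c) ^ (1 + a) - c ^ (1 + a) := by
        linarith [add_rpow_le_rpow_add (Nat.cast_nonneg n) hc (by linarith : 1 ≤ 1 + a)]
    _ = ∑ k ∈ range n, (((k : ℝ) + c + 1) ^ (1 + a) - ((k : ℝ) + c) ^ (1 + a)) :=
        (sum_range_rpow_add_one_sub_rpow c (1 + a) n).symm
    _ ≤ (1 + a) * ∑ k ∈ range n, ((k : ℝ) + c + 1) ^ a := by
        rw [mul_sum]
        exact sum_le_sum fun k _ => (rpow_add_one_sub_rpow_mem_Icc ha (by positivity)).2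
    _ ≤ (1 + a) * ∑ k ∈ range (n + 1), ((k : ℝ) + c) ^ a := by
        rw [sum_range_succ']
        push_cast
        simp only [add_right_comm _ (1 : ℝ), zero_add]
        nlinarith [rpow_nonneg hc a]

theorem tendsto_sum_range_rpow_div_rpow {a c : ℝ} (ha : 0 ≤ a) (hc : 0 ≤ c) :
    Tendsto (fun n : ℕ => (∑ k ∈ range n, ((k : ℝ) + c) ^ a) / (n : ℝ) ^ (1 + a)) atTop
      (𝓝 (1 / (1 + a))) := by
  have hratio : ∀ x : ℝ, Tendsto (fun n : ℕ => (((n : ℝ) + x) / n) ^ (1 + a) / (1 + a)) atTop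
      (𝓝 (1 / (1 + a))) := by
    intro x
    have h := tendsto_add_mul_div_add_mul_atTop_nhds x 0 1 one_ne_zero
    simpa [add_comm] using (h.rpow_const (Or.inl (by norm_num))).div_const (1 + a)
  refine tendsto_of_tendsto_of_tendsto_of_le_of_le' (hratio (-1)) (hratio c) ?_ ?_
  · filter_upwards [eventually_ge_atTop 1] with n hn
    obtain ⟨n, rfl⟩ := Nat.exists_eq_add_of_le' hn
    have hn0 : (0 : ℝ) < n + 1 := by positivity
    push_cast
    rw [add_neg_cancel_right, div_rpow (by positivity) hn0.le, div_div, le_div_iff₀ (by positivity),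
      div_mul_eq_mul_div, div_le_iff₀ (by positivity)]
    nlinarith [rpow_le_one_add_mul_sum_range_succ_rpow ha hc n, rpow_pos_of_pos hn0 (1 + a)]
  · filter_upwards [eventually_ge_atTop 1] with n hn
    have hn0 : (0 : ℝ) < n := by exact_mod_cast hn
    rw [div_rpow (by positivity) hn0.le, div_div, le_div_iff₀ (by positivity),
      div_mul_eq_mul_div, div_le_iff₀ (by positivity)]
    nlinarith [one_add_mul_sum_range_rpow_le ha hc n, rpow_pos_of_pos hn0 (1 + a)]

lemma sum_range_sq_rpow_div_sq_rpow_le {a c : ℝ} (ha : 0 ≤ a) (hc : 0 ≤ c) (n : ℕ) :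
    (∑ k ∈ range n, (((k : ℝ) + c) ^ a) ^ 2) / ((n : ℝ) ^ (1 + a)) ^ 2
      ≤ ((1 + c) ^ a) ^ 2 / n := by
  rcases n.eq_zero_or_pos with rfl | hn
  · simp
  have hn1 : (1 : ℝ) ≤ n := by exact_mod_cast hn
  have hterm : ∀ k ∈ range n, (((k : ℝ) + c) ^ a) ^ 2 ≤ ((1 + c) ^ a * (n : ℝ) ^ a) ^ 2 := by
    intro k hk
    have hkn : (k : ℝ) + 1 ≤ n := by exact_mod_cast mem_range.1 hk
    rw [← mul_rpow (by positivity) (by positivity)]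
    gcongr
    nlinarith
  calc (∑ k ∈ range n, (((k : ℝ) + c) ^ a) ^ 2) / ((n : ℝ) ^ (1 + a)) ^ 2
      ≤ n * ((1 + c) ^ a * (n : ℝ) ^ a) ^ 2 / ((n : ℝ) ^ (1 + a)) ^ 2 := by
        gcongr
        simpa using sum_le_sum hterm
    _ = ((1 + c) ^ a) ^ 2 / n := by
        rw [rpow_add (by positivity), rpow_one]
        field_simp

lemma Filter.Tendsto.div_rpow_of_tendsto_div {ι : Type*} {l : Filter ι} {x g h : ι → ℝ}
    {c p : ℝ} (hx : Tendsto (fun i => x i / h i ^ p) l (𝓝 c)) (hh : ∀ᶠ i in l, 0 < h i)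
    (hg : ∀ᶠ i in l, 0 < g i) (hhg : Tendsto (fun i => h i / g i) l (𝓝 1)) :
    Tendsto (fun i => x i / g i ^ p) l (𝓝 c) := by
  have := hx.mul (hhg.rpow_const (p := p) (Or.inl one_ne_zero))
  rw [one_rpow, mul_one] at this
  refine this.congr' ?_
  filter_upwards [hh, hg] with i hhi hgi
  rw [div_rpow hhi.le hgi.le]
  field_simp [(rpow_pos_of_pos hhi p).ne']

lemma tendsto_natCast_sq_div_succ_sq :
    Tendsto (fun j : ℕ => ((j ^ 2 : ℕ) : ℝ) / ((j + 1) ^ 2 : ℕ)) atTop (𝓝 1) := by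
  simpa [div_pow] using (tendsto_natCast_div_add_atTop (1 : ℝ)).pow 2

lemma tendsto_natCast_sub_one_div :
    Tendsto (fun n : ℕ => ((n - 1 : ℕ) : ℝ) / n) atTop (𝓝 1) := by
  refine ((tendsto_natCast_div_add_atTop (1 : ℝ)).comp (tendsto_sub_atTop_nat 1)).congr' ?_
  filter_upwards [eventually_ge_atTop 1] with n hn
  simp [Nat.cast_sub hn]

lemma Nat.tendsto_sqrt_atTop : Tendsto Nat.sqrt atTop atTop :=
  tendsto_atTop_atTop.2 fun b => ⟨b * b, fun _ hn => (Nat.sqrt_eq b).symm.le.trans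
    (Nat.sqrt_le_sqrt hn)⟩

theorem tendsto_div_rpow_of_tendsto_sq {s : ℕ → ℝ} {c p : ℝ} (hs : Monotone s) (hs0 : 0 ≤ s 0)
    (hp : 0 ≤ p) (h : Tendsto (fun j : ℕ => s (j ^ 2) / ((j ^ 2 : ℕ) : ℝ) ^ p) atTop (𝓝 c)) :
    Tendsto (fun n : ℕ => s n / (n : ℝ) ^ p) atTop (𝓝 c) := by
  have hsq : ∀ᶠ j : ℕ in atTop, (0 : ℝ) < ((j ^ 2 : ℕ) : ℝ) :=
    eventually_gt_atTop 0 |>.mono fun j hj => by positivity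
  have hlower : Tendsto (fun j : ℕ => s (j ^ 2) / (((j + 1) ^ 2 : ℕ) : ℝ) ^ p) atTop (𝓝 c) :=
    h.div_rpow_of_tendsto_div hsq (.of_forall fun j => by positivity)
      tendsto_natCast_sq_div_succ_sq
  have hupper : Tendsto (fun j : ℕ => s ((j + 1) ^ 2) / ((j ^ 2 : ℕ) : ℝ) ^ p) atTop (𝓝 c) := by
    refine ((tendsto_add_atTop_iff_nat 1).2 h).div_rpow_of_tendsto_div
      (.of_forall fun j => by positivity) hsq ?_
    simpa using tendsto_natCast_sq_div_succ_sq.inv₀ one_ne_zero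
  refine tendsto_of_tendsto_of_tendsto_of_le_of_le'
    (hlower.comp Nat.tendsto_sqrt_atTop) (hupper.comp Nat.tendsto_sqrt_atTop) ?_ ?_
  all_goals
    filter_upwards [eventually_ge_atTop 1] with n hn
    have hsqrt := Nat.sqrt_le' n
    have hsqrt' := (Nat.lt_succ_sqrt' n).le
    have hs_nonneg : ∀ k, 0 ≤ s k := fun k => hs0.trans (hs (Nat.zero_le k))
    simp only [Function.comp_apply]
  · calc s (n.sqrt ^ 2) / (((n.sqrt + 1) ^ 2 : ℕ) : ℝ) ^ p ≤ s (n.sqrt ^ 2) / (n : ℝ) ^ p := by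
          gcongr
          exact hs_nonneg _
      _ ≤ s n / (n : ℝ) ^ p := by gcongr; exact hs hsqrt
  · calc s n / (n : ℝ) ^ p ≤ s ((n.sqrt + 1) ^ 2) / (n : ℝ) ^ p := by gcongr; exact hs hsqrt'
      _ ≤ s ((n.sqrt + 1) ^ 2) / ((n.sqrt ^ 2 : ℕ) : ℝ) ^ p := by
          have : 0 < n.sqrt := Nat.sqrt_pos.2 hn
          gcongr
          exact hs_nonneg _

theorem tendsto_sSup_le_div_rpow {u : ℕ → ℝ} {c p : ℝ} (hp : 0 < p) (hc : 0 < c)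
    (h : Tendsto (fun n : ℕ => u n / (n : ℝ) ^ p) atTop (𝓝 c)) :
    Tendsto (fun t : ℝ => ((sSup {n : ℕ | u n ≤ t} : ℕ) : ℝ) / t ^ (1 / p)) atTop
      (𝓝 (c⁻¹ ^ (1 / p))) := by
  have hu : Tendsto u atTop atTop := by
    refine (h.pos_mul_atTop hc
      ((tendsto_rpow_atTop hp).comp tendsto_natCast_atTop_atTop)).congr' ?_
    filter_upwards [eventually_gt_atTop 0] with n hn
    have : (0 : ℝ) < n := by exact_mod_cast hn
    exact div_mul_cancel₀ _ (rpow_pos_of_pos this p).ne'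
  set N : ℝ → ℕ := fun t => sSup {n : ℕ | u n ≤ t}
  have hbdd : ∀ t, BddAbove {n : ℕ | u n ≤ t} := fun t => by
    obtain ⟨K, hK⟩ := (hu.eventually_gt_atTop t).exists_forall_of_atTop
    exact ⟨K, fun n hn => not_lt.1 fun hKn => (hK n hKn.le).not_ge hn⟩
  have hNtop : Tendsto N atTop atTop :=
    tendsto_atTop_atTop.2 fun K => ⟨u K, fun t ht => le_csSup (hbdd t) ht⟩
  have hNpos : ∀ᶠ t in atTop, (0 : ℝ) < N t :=
    (hNtop.eventually_gt_atTop 0).mono fun t ht => by exact_mod_cast ht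
  have hlower : Tendsto (fun t => u (N t) / (N t : ℝ) ^ p) atTop (𝓝 c) := h.comp hNtop
  have hupper : Tendsto (fun t => u (N t + 1) / (N t : ℝ) ^ p) atTop (𝓝 c) := by
    refine (((tendsto_add_atTop_iff_nat 1).2 h).comp hNtop).div_rpow_of_tendsto_div
      (.of_forall fun t => by positivity) hNpos ?_
    simpa [Function.comp_def] using
      ((tendsto_natCast_div_add_atTop (1 : ℝ)).inv₀ one_ne_zero).comp hNtop
  have hsq : Tendsto (fun t => t / (N t : ℝ) ^ p) atTop (𝓝 c) := by
    refine tendsto_of_tendsto_of_tendsto_of_le_of_le' hlower hupper ?_ ?_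
    · filter_upwards [hNpos, eventually_ge_atTop (u 0)] with t ht ht0
      have : u (N t) ≤ t := Nat.sSup_mem ⟨0, ht0⟩ (hbdd t)
      gcongr
    · filter_upwards [hNpos] with t ht
      have : t < u (N t + 1) := not_le.1 fun hle =>
        (Nat.lt_succ_self _).not_ge (le_csSup (hbdd t) hle)
      gcongr
  refine ((hsq.inv₀ hc.ne').rpow_const (p := 1 / p) (Or.inl (inv_ne_zero hc.ne'))).congr' ?_
  filter_upwards [eventually_gt_atTop 0] with t ht
  rw [inv_div, div_rpow (by positivity) ht.le, ← rpow_mul (Nat.cast_nonneg _),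
    mul_one_div_cancel hp.ne', rpow_one]

theorem ae_tendsto_sub_integral_div_of_summable_variance {Ω : Type*} {mΩ : MeasurableSpace Ω}
    {μ : Measure Ω} [IsFiniteMeasure μ] {Y : ℕ → Ω → ℝ} {b : ℕ → ℝ}
    (hY : ∀ n, MemLp (Y n) 2 μ) (hb : ∀ n, 0 < b n)
    (hsum : Summable fun n => Var[Y n; μ] / b n ^ 2) :
    ∀ᵐ ω ∂μ, Tendsto (fun n => (Y n ω - μ[Y n]) / b n) atTop (𝓝 0) := by
  have hdev : ∀ ε : ℝ, 0 < ε → ∀ᵐ ω ∂μ, ∀ᶠ n in atTop, |Y n ω - μ[Y n]| < ε * b n := by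
    intro ε hε
    have hbound : ∀ n, μ {ω | ε * b n ≤ |Y n ω - μ[Y n]|}
        ≤ ENNReal.ofReal ((ε ^ 2)⁻¹ * (Var[Y n; μ] / b n ^ 2)) := fun n => by
      convert meas_ge_le_variance_div_sq (hY n) (mul_pos hε (hb n)) using 2
      rw [mul_pow]
      field_simp
    have hfin : ∑' n, μ {ω | ε * b n ≤ |Y n ω - μ[Y n]|} ≠ ⊤ := by
      refine ne_top_of_le_ne_top ?_ (ENNReal.tsum_le_tsum hbound)
      rw [← ENNReal.ofReal_tsum_of_nonneg (fun n => mul_nonneg (by positivity)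
        (div_nonneg (variance_nonneg _ _) (sq_nonneg _))) (hsum.mul_left _)]
      exact ENNReal.ofReal_ne_top
    filter_upwards [ae_eventually_notMem hfin] with ω hω
    exact hω.mono fun n hn => not_le.1 hn
  have hdev' := ae_all_iff.2 fun l : ℕ => hdev (1 / (l + 1)) Nat.one_div_pos_of_nat
  filter_upwards [hdev'] with ω hω
  rw [NormedAddGroup.tendsto_nhds_zero]
  intro ε hε
  obtain ⟨l, hl⟩ := exists_nat_one_div_lt hε
  filter_upwards [hω l] with n hn
  rw [norm_div, Real.norm_eq_abs, Real.norm_of_nonneg (hb n).le, div_lt_iff₀ (hb n)]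
  exact hn.trans_le (by gcongr; exact (hb n).le)

theorem ae_tendsto_sum_range_div_rpow_of_hasLaw_expMeasure {Ω : Type*} {mΩ : MeasurableSpace Ω}
    {μ : Measure Ω} [IsProbabilityMeasure μ] {X : ℕ → Ω → ℝ} {a c : ℝ} (ha : 0 ≤ a) (hc : 0 < c)
    (hX : ∀ k, HasLaw (X k) (expMeasure (((k : ℝ) + c) ^ a)⁻¹) μ) (hind : iIndepFun X μ) :
    ∀ᵐ ω ∂μ, Tendsto (fun n : ℕ => (∑ k ∈ range n, X k ω) / (n : ℝ) ^ (1 + a)) atTop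
      (𝓝 (1 / (1 + a))) := by
  have hr : ∀ k : ℕ, 0 < (((k : ℝ) + c) ^ a)⁻¹ := fun k => by positivity
  have hL2 : ∀ k, MemLp (X k) 2 μ := fun k => (hX k).memLp_two_of_expMeasure (hr k)
  have hmean : ∀ n, μ[∑ k ∈ range n, X k] = ∑ k ∈ range n, ((k : ℝ) + c) ^ a := fun n => by
    simp only [Finset.sum_apply]
    rw [integral_finsetSum _ fun k _ => (hL2 k).integrable one_le_two]
    exact sum_congr rfl fun k _ => by rw [(hX k).integral_eq_inv_of_expMeasure (hr k), inv_inv]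
  have hvar : ∀ n, Var[∑ k ∈ range n, X k; μ] = ∑ k ∈ range n, (((k : ℝ) + c) ^ a) ^ 2 :=
    fun n => by
    rw [IndepFun.variance_sum (fun k _ => hL2 k) (fun i _ j _ hij => hind.indepFun hij)]
    exact sum_congr rfl fun k _ => by
      rw [(hX k).variance_eq_inv_sq_of_expMeasure (hr k), inv_inv]
  have hsummable : Summable fun j : ℕ =>
      Var[∑ k ∈ range ((j + 1) ^ 2), X k; μ] / ((((j + 1) ^ 2 : ℕ) : ℝ) ^ (1 + a)) ^ 2 := by
    refine .of_nonneg_of_le (fun j => div_nonneg (variance_nonneg _ _) (sq_nonneg _))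
      (fun j => (hvar _).symm ▸ sum_range_sq_rpow_div_sq_rpow_le ha hc.le _) ?_
    have := (summable_nat_add_iff 1).2 (Real.summable_one_div_nat_pow.2 one_lt_two)
    simpa [div_eq_mul_inv] using this.mul_left (((1 + c) ^ a) ^ 2)
  -- Squares of `j + 1` rather than of `j`, so that the normalisation stays positive.
  have hdev := ae_tendsto_sub_integral_div_of_summable_variance
    (fun j => memLp_finsetSum' _ fun k _ => hL2 k) (fun j => by positivity) hsummable
  have hnonneg : ∀ᵐ ω ∂μ, ∀ k, 0 ≤ X k ω := ae_all_iff.2 fun k =>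
    (hX k).ae_iff (p := fun x => 0 ≤ x) (by fun_prop) |>.2 (ae_nonneg_expMeasure _)
  filter_upwards [hdev, hnonneg] with ω hω hnn
  refine tendsto_div_rpow_of_tendsto_sq
    (fun m n hmn => sum_le_sum_of_subset_of_nonneg (range_mono hmn) fun k _ _ => hnn k)
    (by simp) (by linarith) ?_
  rw [← tendsto_add_atTop_iff_nat 1]
  have hsq : Tendsto (fun j : ℕ => (j + 1) ^ 2) atTop atTop :=
    (tendsto_pow_atTop two_ne_zero).comp (tendsto_add_atTop_nat 1)
  have := hω.add ((tendsto_sum_range_rpow_div_rpow ha hc.le).comp hsq)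
  rw [zero_add] at this
  refine this.congr fun j => ?_
  rw [Function.comp_apply, hmean, sub_div, sub_add_cancel, Finset.sum_apply]

theorem pure_birth_growth_general
    {Ω : Type*} [MeasureSpace Ω] (μ : Measure Ω) [IsProbabilityMeasure μ]
    (m : ℕ) (hm : 1 ≤ m) (d a : ℝ) (hd : 0 ≤ d) (ha : 0 < a)
    (E : ℕ → Ω → ℝ) (hmeas : ∀ k, Measurable (E k))
    (hindep : iIndepFun E μ)
    (hdist : ∀ k : ℕ,
      Measure.map (E k) μ = expMeasure ((((m : ℝ) + k + d) ^ a)⁻¹).toNNReal)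
    (T : ℕ → Ω → ℝ) (hT : ∀ n ω, T n ω = ∑ k ∈ Finset.range (n - 1), E k ω)
    (Z : ℝ → Ω → ℕ) (hZ : ∀ t ω, Z t ω = sSup {n : ℕ | T n ω ≤ t} + m - 1) :
    ∀ᵐ ω ∂μ, Tendsto
      (fun t : ℝ => (Z t ω : ℝ) / t ^ ((1 : ℝ) / (1 + a)))
      atTop (nhds ((1 + a) ^ ((1 : ℝ) / (1 + a)))) := by
  have hc : (0 : ℝ) < m + d := by
    have : (1 : ℝ) ≤ m := by exact_mod_cast hm
    linarith
  have hlaw : ∀ k : ℕ, HasLaw (E k) (expMeasure (((k : ℝ) + (m + d)) ^ a)⁻¹) μ := fun k =>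
    ⟨(hmeas k).aemeasurable, by rw [hdist k, Real.coe_toNNReal _ (by positivity)]; ring_nf⟩
  filter_upwards [ae_tendsto_sum_range_div_rpow_of_hasLaw_expMeasure ha.le hc hlaw hindep]
    with ω hω
  have hTlim : Tendsto (fun n : ℕ => T n ω / (n : ℝ) ^ (1 + a)) atTop (𝓝 (1 / (1 + a))) := by
    simp only [hT]
    refine (hω.comp (tendsto_sub_atTop_nat 1)).div_rpow_of_tendsto_div ?_ ?_
      tendsto_natCast_sub_one_div
    · filter_upwards [eventually_ge_atTop 2] with n hn
      exact_mod_cast (by omega : 0 < n - 1)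
    · filter_upwards [eventually_ge_atTop 1] with n hn
      exact_mod_cast hn
  have hN := tendsto_sSup_le_div_rpow (by linarith) (by positivity) hTlim
  rw [inv_div, div_one] at hN
  have hoffset : Tendsto (fun t : ℝ => ((m : ℝ) - 1) / t ^ ((1 : ℝ) / (1 + a))) atTop (𝓝 0) :=
    tendsto_const_nhds.div_atTop (tendsto_rpow_atTop (by positivity))
  have := hN.add hoffset
  rw [add_zero] at this
  refine this.congr fun t => ?_
  rw [hZ, Nat.add_sub_assoc hm, Nat.cast_add, Nat.cast_sub hm, Nat.cast_one, add_div]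

/-- Let `Z(t)` be a pure birth process started at `m` with birth rate `1/(i+d)^a` in state `i`,
realized as `Z t = max {n : T n ≤ t} + m - 1` where `T n = E_0 + ⋯ + E_{n-2}` is a sum of
independent exponentials with means `(m+d)^a, …, (m+n-2+d)^a`.  Then
`Z(t)/t^{1/(1+a)} → (1+a)^{1/(1+a)}` almost surely as `t → ∞`. -/
theorem pure_birth_growth
    {Ω : Type*} [MeasureSpace Ω] (μ : Measure Ω) [IsProbabilityMeasure μ]
    (m : ℕ) (hm : 1 ≤ m) (d a : ℝ) (hd : 0 ≤ d) (ha : 0 < a) (ha1 : a ≤ 1)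
    (E : ℕ → Ω → ℝ) (hmeas : ∀ k, Measurable (E k))
    (hindep : iIndepFun E μ)
    (hdist : ∀ k : ℕ,
      Measure.map (E k) μ = expMeasure ((((m : ℝ) + k + d) ^ a)⁻¹).toNNReal)
    (T : ℕ → Ω → ℝ) (hT : ∀ n ω, T n ω = ∑ k ∈ Finset.range (n - 1), E k ω)
    (Z : ℝ → Ω → ℕ) (hZ : ∀ t ω, Z t ω = sSup {n : ℕ | T n ω ≤ t} + m - 1) :
    ∀ᵐ ω ∂μ, Tendsto
      (fun t : ℝ => (Z t ω : ℝ) / t ^ ((1 : ℝ) / (1 + a)))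
      atTop (nhds ((1 + a) ^ ((1 : ℝ) / (1 + a)))) :=
  pure_birth_growth_general μ m hm d a hd ha E hmeas hindep hdist T hT Z hZ
end

section
/- Let λ* > 0, α > 0, δ ≥ 0 and define p̃_k = ((k+δ)^α λ*)/((k+δ)^α λ* + 1) · ∏_{i=1}^{k-1} 1/((i+δ)^α λ* + 1) for k ≥ 1. Then ∑_{k=1}^∞ p̃_k = 1, i.e., (p̃_k) is a probability distribution. -/
/-!
Write `x i = (i + δ)^α λ*` and `Q n = ∏_{i=1}^{n} 1/(x i + 1)` (`survivalProd x n`). Then `p̃_{k+1} = Q k - Q (k+1)`,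
so the partial sums telescope to `1 - Q n`. Since `x i ≥ x 1 > 0` for `i ≥ 1`, `Q n ≤ (x 1 + 1)⁻ⁿ`
tends to `0`, and the nonnegative series sums to `1`.
-/

open Finset Filter Topology

noncomputable def survivalProd (x : ℕ → ℝ) (n : ℕ) : ℝ :=
  ∏ i ∈ Icc 1 n, 1 / (x i + 1)

section survivalProd

variable {x : ℕ → ℝ}

theorem survivalProd_zero (x : ℕ → ℝ) : survivalProd x 0 = 1 := by
  simp [survivalProd]

theorem survivalProd_succ (x : ℕ → ℝ) (n : ℕ) :
    survivalProd x (n + 1) = survivalProd x n * (1 / (x (n + 1) + 1)) :=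
  prod_Icc_succ_top (by omega) _

theorem survivalProd_nonneg (hx : ∀ i, 1 ≤ i → 0 ≤ x i) (n : ℕ) : 0 ≤ survivalProd x n :=
  prod_nonneg fun i hi => by have := hx i (mem_Icc.mp hi).1; positivity

theorem survivalProd_le_pow {c : ℝ} (hc : 0 ≤ c) (hcx : ∀ i, 1 ≤ i → c ≤ x i) (n : ℕ) :
    survivalProd x n ≤ (1 / (c + 1)) ^ n := by
  calc survivalProd x n ≤ ∏ _i ∈ Icc 1 n, 1 / (c + 1) := by
        refine prod_le_prod (fun i hi => ?_) (fun i hi => ?_)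
        · have := hc.trans (hcx i (mem_Icc.mp hi).1)
          positivity
        · gcongr
          exact hcx i (mem_Icc.mp hi).1
    _ = (1 / (c + 1)) ^ n := by rw [prod_const, Nat.card_Icc, Nat.add_sub_cancel]

theorem tendsto_survivalProd_atTop_nhds_zero {c : ℝ} (hc : 0 < c) (hcx : ∀ i, 1 ≤ i → c ≤ x i) :
    Tendsto (survivalProd x) atTop (𝓝 0) := by
  refine squeeze_zero (survivalProd_nonneg fun i hi => hc.le.trans (hcx i hi)) (survivalProd_le_pow hc.le hcx) ?_
  refine tendsto_pow_atTop_nhds_zero_of_lt_one (by positivity) ?_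
  rw [div_lt_one (by positivity)]
  linarith

theorem survivalProd_sub_survivalProd_succ {n : ℕ} (hx : x (n + 1) + 1 ≠ 0) :
    survivalProd x n - survivalProd x (n + 1) =
      x (n + 1) / (x (n + 1) + 1) * survivalProd x n := by
  rw [survivalProd_succ]
  field_simp
  ring

theorem hasSum_mul_survivalProd_of_tendsto (hx : ∀ i, 1 ≤ i → 0 ≤ x i)
    (hlim : Tendsto (survivalProd x) atTop (𝓝 0)) :
    HasSum (fun k => x (k + 1) / (x (k + 1) + 1) * survivalProd x k) 1 := by
  have hterm (k : ℕ) := survivalProd_sub_survivalProd_succ (n := k) (by linarith [hx (k + 1) (by omega)])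
  refine (hasSum_iff_tendsto_nat_of_nonneg (fun k => ?_) 1).mpr ?_
  · have := hx (k + 1) (by omega)
    have := survivalProd_nonneg hx k
    positivity
  · simp_rw [← hterm, sum_range_sub']
    simpa [survivalProd_zero] using hlim.const_sub (survivalProd x 0)

end survivalProd

/-- With `p̃_k = ((k+δ)^α λ*)/((k+δ)^α λ* + 1) ⬝ ∏_{i=1}^{k-1} 1/((i+δ)^α λ* + 1)` for `k ≥ 1`,
we have `∑_{k=1}^∞ p̃_k = 1`. -/
theorem limiting_degree_distribution_sums_to_one
    (l α δ : ℝ) (hl : 0 < l) (hα : 0 < α) (hδ : 0 ≤ δ) :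
    (∑' k : ℕ,
      (((k : ℝ) + 1 + δ) ^ α * l) / (((k : ℝ) + 1 + δ) ^ α * l + 1) *
        ∏ i ∈ Finset.Icc 1 k, 1 / (((i : ℝ) + δ) ^ α * l + 1)) = 1 := by
  set x : ℕ → ℝ := fun i => ((i : ℝ) + δ) ^ α * l
  have hx_ge : ∀ i, 1 ≤ i → (1 + δ) ^ α * l ≤ x i := fun i hi => by
    have : (1 : ℝ) ≤ i := by exact_mod_cast hi
    unfold x
    gcongr
  have hpos : 0 < (1 + δ) ^ α * l := by positivity
  have := hasSum_mul_survivalProd_of_tendsto (fun i hi => hpos.le.trans (hx_ge i hi))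
    (tendsto_survivalProd_atTop_nhds_zero hpos hx_ge)
  simpa [x, survivalProd] using this.tsum_eq
end

section
/- For λ* > 0, α > 0, δ ≥ 0, the tail t_n = ∏_{i=1}^{n-1} 1/(1 + (i+δ)^α λ*) satisfies t_n ≤ 1/((λ*)^{n-1} ((n-1)!)^α), and hence t_n = o(c^n) for every c > 0 (the tail decays faster than any exponential). -/
open Finset Filter Topology
open scoped Nat

lemma prod_Icc_natCast_rpow (m : ℕ) (α : ℝ) :
    ∏ i ∈ Icc 1 m, (i : ℝ) ^ α = (m ! : ℝ) ^ α := by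
  rw [Real.finsetProd_rpow _ _ (fun i _ => i.cast_nonneg) α, ← Nat.cast_prod,
    ← Finset.Ico_add_one_right_eq_Icc, Finset.prod_Ico_id_eq_factorial]

lemma prod_Icc_one_div_one_add_rpow_mul_le {l α δ : ℝ} (hl : 0 < l) (hα : 0 ≤ α) (hδ : 0 ≤ δ)
    (m : ℕ) :
    ∏ i ∈ Icc 1 m, 1 / (1 + ((i : ℝ) + δ) ^ α * l) ≤ 1 / (l ^ m * (m ! : ℝ) ^ α) := by
  have hfactor : ∀ i ∈ Icc 1 m,
      1 / (1 + ((i : ℝ) + δ) ^ α * l) ≤ 1 / ((i : ℝ) ^ α * l) := by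
    intro i hi
    have hi : (0 : ℝ) < i := by exact_mod_cast (mem_Icc.mp hi).1
    have hmono : (i : ℝ) ^ α ≤ ((i : ℝ) + δ) ^ α :=
      Real.rpow_le_rpow hi.le (le_add_of_nonneg_right hδ) hα
    gcongr
    linarith [mul_le_mul_of_nonneg_right hmono hl.le]
  calc ∏ i ∈ Icc 1 m, 1 / (1 + ((i : ℝ) + δ) ^ α * l)
      ≤ ∏ i ∈ Icc 1 m, 1 / ((i : ℝ) ^ α * l) :=
        prod_le_prod (fun i _ => by positivity) hfactor
    _ = 1 / (l ^ m * (m ! : ℝ) ^ α) := by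
        rw [prod_div_distrib, prod_const_one, prod_mul_distrib, prod_const, Nat.card_Icc,
          Nat.add_sub_cancel, prod_Icc_natCast_rpow, mul_comm]

lemma tendsto_one_div_pow_mul_factorial_rpow {x α : ℝ} (hx : 0 < x) (hα : 0 < α) :
    Tendsto (fun m : ℕ => 1 / (x ^ m * (m ! : ℝ) ^ α)) atTop (𝓝 0) := by
  -- `1 / (x ^ m * m! ^ α) = (r ^ m / m!) ^ α` with `r ^ α = 1 / x`.
  set r : ℝ := (1 / x) ^ α⁻¹
  have hr : 0 ≤ r := by positivity
  have hrα : r ^ α = 1 / x := Real.rpow_inv_rpow (by positivity) hα.ne'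
  have hrewrite : ∀ m : ℕ, (r ^ m / (m ! : ℝ)) ^ α = 1 / (x ^ m * (m ! : ℝ) ^ α) := by
    intro m
    rw [Real.div_rpow (by positivity) (by positivity), ← Real.rpow_natCast, ← Real.rpow_mul hr,
      mul_comm, Real.rpow_mul hr, hrα, Real.rpow_natCast, div_pow, one_pow, div_div]
  have hcont : ContinuousAt (fun y : ℝ => y ^ α) 0 :=
    Real.continuousAt_rpow_const 0 α (Or.inr hα.le)
  simpa only [Function.comp_def, hrewrite, Real.zero_rpow hα.ne'] using
    hcont.tendsto.comp (FloorSemiring.tendsto_pow_div_factorial_atTop r)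

/-- For `λ* > 0`, `α > 0`, `δ ≥ 0`, the tail `t_n = ∏_{i=1}^{n-1} 1/(1 + (i+δ)^α λ*)`
satisfies `t_n ≤ 1/((λ*)^{n-1} ((n-1)!)^α)`, hence `t_n = o(c^n)` for every `c > 0`. -/
theorem tail_decays_faster_than_exponential
    (l α δ : ℝ) (hl : 0 < l) (hα : 0 < α) (hδ : 0 ≤ δ) :
    (∀ n : ℕ, 1 ≤ n →
      (∏ i ∈ Finset.Icc 1 (n - 1), 1 / (1 + ((i : ℝ) + δ) ^ α * l)) ≤
        1 / (l ^ (n - 1) * ((Nat.factorial (n - 1) : ℝ)) ^ α)) ∧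
    (∀ c : ℝ, 0 < c →
      Tendsto (fun n : ℕ =>
        (∏ i ∈ Finset.Icc 1 (n - 1), 1 / (1 + ((i : ℝ) + δ) ^ α * l)) / c ^ n)
        atTop (nhds 0)) := by
  have hbound := prod_Icc_one_div_one_add_rpow_mul_le hl hα.le hδ
  refine ⟨fun n _ => hbound (n - 1), fun c hc => ?_⟩
  rw [← tendsto_add_atTop_iff_nat 1]
  simp only [Nat.add_sub_cancel]
  have hlim := (tendsto_one_div_pow_mul_factorial_rpow (mul_pos hl hc) hα).const_mul c⁻¹
  rw [mul_zero] at hlim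
  refine squeeze_zero (fun m => by positivity) (fun m => ?_) hlim
  calc (∏ i ∈ Icc 1 m, 1 / (1 + ((i : ℝ) + δ) ^ α * l)) / c ^ (m + 1)
      ≤ 1 / (l ^ m * (m ! : ℝ) ^ α) / c ^ (m + 1) := by gcongr; exact hbound m
    _ = c⁻¹ * (1 / ((l * c) ^ m * (m ! : ℝ) ^ α)) := by
        rw [pow_succ, mul_pow]
        field_simp
end
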